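/- Let X be a real Banach space and F a Banach lattice with property (d): for every disjoint w*-null sequence (f_n) in F′ and every x ≥ 0 in F one has sup{ f_n(w) : |w| ≤ x } → 0. Then every semi-compact operator T : X → F is almost limited: ‖T′ f_n‖ → 0 for every disjoint w*-null sequence (f_n) in F′. -/

import Mathlib

open Filter Topology

/-- Two continuous functionals `f, g` on a Banach lattice are disjoint
(`|f| ⊓ |g| = 0` in the dual lattice). -/
def DualDisjoint {F : Type*} [NormedAddCommGroup F] [Lattice F] [IsOrderedAddMonoid F] [HasSolidNorm F] [NormedSpace ℝ F]
    (f g : F →L[ℝ] ℝ) : Prop :=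
  ∀ y : F, 0 ≤ y → ∀ ε : ℝ, 0 < ε → ∃ u v : F, 0 ≤ u ∧ 0 ≤ v ∧ u + v = y ∧
    (∀ w : F, |w| ≤ u → |f w| ≤ ε) ∧ (∀ z : F, |z| ≤ v → |g z| ≤ ε)

/-!
Split `T x = w + r` with `w = (Tx)⁺ ⊓ u - (Tx)⁻ ⊓ u` in the order interval `[-u, u]` and
`‖r‖ ≤ 2 ‖(|Tx| - u)⁺‖`. Semi-compactness makes `r` uniformly small on the unit ball, so
`‖T′ fₙ‖ ≤ sup {fₙ w : |w| ≤ u} + 2 ε sup ‖fₙ‖`; the first term tends to zero by property (d)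
and the second is small because a w*-null sequence is bounded (Banach–Steinhaus).
-/

theorem ContinuousLinearMap.exists_norm_le_of_tendsto {𝕜 E G : Type*} [NontriviallyNormedField 𝕜]
    [NormedAddCommGroup E] [NormedSpace 𝕜 E] [CompleteSpace E]
    [NormedAddCommGroup G] [NormedSpace 𝕜 G] {g : ℕ → E →L[𝕜] G} {l : E → G}
    (h : ∀ y, Tendsto (fun n => g n y) atTop (𝓝 (l y))) : ∃ M, ∀ n, ‖g n‖ ≤ M :=
  banach_steinhaus fun y =>
    let ⟨C, hC⟩ := (h y).norm.bddAbove_range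
    ⟨C, fun n => hC ⟨n, rfl⟩⟩

section NormedLattice

variable {α : Type*} [NormedAddCommGroup α] [Lattice α] [IsOrderedAddMonoid α] [HasSolidNorm α]

theorem norm_posPart_sub_le_of_le {a b : α} (u : α) (h : a ≤ b) : ‖(a - u)⁺‖ ≤ ‖(b - u)⁺‖ :=
  norm_le_norm_of_abs_le_abs <| by
    rw [abs_of_nonneg (posPart_nonneg _), abs_of_nonneg (posPart_nonneg _)]
    exact posPart_mono (sub_le_sub_right h u)

theorem exists_abs_le_norm_sub_le (a : α) {u : α} (hu : 0 ≤ u) :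
    ∃ w, |w| ≤ u ∧ ‖a - w‖ ≤ 2 * ‖(|a| - u)⁺‖ := by
  refine ⟨a⁺ ⊓ u - a⁻ ⊓ u, abs_le'.2 ⟨?_, ?_⟩, ?_⟩
  · exact (sub_le_self _ (le_inf (negPart_nonneg a) hu)).trans inf_le_right
  · rw [neg_sub]
    exact (sub_le_self _ (le_inf (posPart_nonneg a) hu)).trans inf_le_right
  · have hsplit : a - (a⁺ ⊓ u - a⁻ ⊓ u) = (a⁺ - u)⁺ - (a⁻ - u)⁺ := by
      rw [inf_eq_sub_posPart_sub, inf_eq_sub_posPart_sub]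
      nth_rw 1 [← posPart_sub_negPart a]
      abel
    calc ‖a - (a⁺ ⊓ u - a⁻ ⊓ u)‖ ≤ ‖(a⁺ - u)⁺‖ + ‖(a⁻ - u)⁺‖ := hsplit ▸ norm_sub_le _ _
      _ ≤ ‖(|a| - u)⁺‖ + ‖(|a| - u)⁺‖ := by
        gcongr
        · exact norm_posPart_sub_le_of_le u (sup_le (le_abs_self a) (abs_nonneg a))
        · exact norm_posPart_sub_le_of_le u (sup_le (neg_le_abs a) (abs_nonneg a))
      _ = 2 * ‖(|a| - u)⁺‖ := (two_mul _).symm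

end NormedLattice

section OrderInterval

variable {F : Type*} [NormedAddCommGroup F] [Lattice F] [HasSolidNorm F] [NormedSpace ℝ F]

/-- For `0 ≤ u` this is `|f| u`, the modulus of `f` in the dual lattice evaluated at `u`. -/
noncomputable def sSupOrderInterval (f : F →L[ℝ] ℝ) (u : F) : ℝ :=
  sSup {r : ℝ | ∃ w : F, |w| ≤ u ∧ r = f w}

theorem bddAbove_apply_abs_le (f : F →L[ℝ] ℝ) (u : F) :
    BddAbove {r : ℝ | ∃ w : F, |w| ≤ u ∧ r = f w} := by
  refine ⟨‖f‖ * ‖u‖, ?_⟩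
  rintro r ⟨w, hw, rfl⟩
  calc f w ≤ ‖f w‖ := le_abs_self _
    _ ≤ ‖f‖ * ‖w‖ := f.le_opNorm w
    _ ≤ ‖f‖ * ‖u‖ := by
      gcongr
      exact norm_le_norm_of_abs_le_abs (hw.trans (le_abs_self u))

theorem apply_le_sSupOrderInterval (f : F →L[ℝ] ℝ) {u w : F} (hw : |w| ≤ u) :
    f w ≤ sSupOrderInterval f u :=
  le_csSup (bddAbove_apply_abs_le f u) ⟨w, hw, rfl⟩

theorem abs_apply_le_sSupOrderInterval (f : F →L[ℝ] ℝ) {u w : F} (hw : |w| ≤ u) :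
    |f w| ≤ sSupOrderInterval f u := by
  refine abs_le'.2 ⟨apply_le_sSupOrderInterval f hw, ?_⟩
  rw [← map_neg]
  exact apply_le_sSupOrderInterval f ((abs_neg w).trans_le hw)

variable [IsOrderedAddMonoid F]

theorem sSupOrderInterval_nonneg (f : F →L[ℝ] ℝ) {u : F} (hu : 0 ≤ u) :
    0 ≤ sSupOrderInterval f u := by
  simpa using apply_le_sSupOrderInterval f (w := 0) (by rwa [abs_zero])

theorem abs_apply_le_sSupOrderInterval_add (f : F →L[ℝ] ℝ) (a : F) {u : F} (hu : 0 ≤ u) :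
    |f a| ≤ sSupOrderInterval f u + 2 * ‖f‖ * ‖(|a| - u)⁺‖ := by
  obtain ⟨w, hw, hr⟩ := exists_abs_le_norm_sub_le a hu
  calc |f a| = |f w + f (a - w)| := by rw [← map_add, add_sub_cancel]
    _ ≤ |f w| + ‖f (a - w)‖ := abs_add_le _ _
    _ ≤ sSupOrderInterval f u + ‖f‖ * (2 * ‖(|a| - u)⁺‖) :=
      add_le_add (abs_apply_le_sSupOrderInterval f hw) (f.le_opNorm_of_le hr)
    _ = sSupOrderInterval f u + 2 * ‖f‖ * ‖(|a| - u)⁺‖ := by ring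

theorem opNorm_comp_le_sSupOrderInterval_add {X : Type*} [NormedAddCommGroup X] [NormedSpace ℝ X]
    (f : F →L[ℝ] ℝ) (T : X →L[ℝ] F) {u : F} (hu : 0 ≤ u) {ε : ℝ} (hε : 0 ≤ ε)
    (hT : ∀ x : X, ‖x‖ = 1 → ‖(|T x| - u)⁺‖ ≤ ε) :
    ‖f.comp T‖ ≤ sSupOrderInterval f u + 2 * ‖f‖ * ε := by
  refine ContinuousLinearMap.opNorm_le_of_unit_norm
    (add_nonneg (sSupOrderInterval_nonneg f hu) (by positivity)) fun x hx => ?_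
  calc ‖f (T x)‖ ≤ sSupOrderInterval f u + 2 * ‖f‖ * ‖(|T x| - u)⁺‖ :=
        abs_apply_le_sSupOrderInterval_add f (T x) hu
    _ ≤ sSupOrderInterval f u + 2 * ‖f‖ * ε := by gcongr; exact hT x hx

end OrderInterval

theorem semi_compact_implies_almost_limited_general
    {X : Type*} [NormedAddCommGroup X] [NormedSpace ℝ X]
    {F : Type*} [NormedAddCommGroup F] [Lattice F] [IsOrderedAddMonoid F] [HasSolidNorm F] [NormedSpace ℝ F] [CompleteSpace F]
    -- property (d) of F
    (hd : ∀ f : ℕ → F →L[ℝ] ℝ,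
      (∀ n m, n ≠ m → DualDisjoint (f n) (f m)) →
      (∀ y : F, Tendsto (fun n => f n y) atTop (𝓝 0)) →
      ∀ y : F, 0 ≤ y →
        Tendsto (fun n => sSup {r : ℝ | ∃ w : F, |w| ≤ y ∧ r = f n w}) atTop (𝓝 0))
    (T : X →L[ℝ] F)
    -- T is semi-compact
    (hsc : ∀ ε : ℝ, 0 < ε → ∃ u : F, 0 ≤ u ∧
      ∀ x : X, ‖x‖ ≤ 1 → ‖(|T x| - u) ⊔ 0‖ ≤ ε) :
    ∀ f : ℕ → F →L[ℝ] ℝ,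
      (∀ n m, n ≠ m → DualDisjoint (f n) (f m)) →
      (∀ y : F, Tendsto (fun n => f n y) atTop (𝓝 0)) →
      Tendsto (fun n => ‖(f n).comp T‖) atTop (𝓝 0) := by
  intro f hdisj hw
  obtain ⟨M, hM⟩ := ContinuousLinearMap.exists_norm_le_of_tendsto hw
  have hM0 : 0 ≤ M := (norm_nonneg _).trans (hM 0)
  refine Metric.tendsto_atTop.2 fun δ hδ => ?_
  obtain ⟨u, hu, hT⟩ := hsc (δ / (4 * (M + 1))) (by positivity)
  obtain ⟨N, hN⟩ := Metric.tendsto_atTop.1 (hd f hdisj hw u hu) (δ / 2) (half_pos hδ)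
  refine ⟨N, fun n hn => ?_⟩
  have hS : sSupOrderInterval (f n) u < δ / 2 := by
    have h := hN n hn
    rw [Real.dist_eq, sub_zero] at h
    exact (le_abs_self _).trans_lt h
  rw [dist_zero_right, norm_norm]
  calc ‖(f n).comp T‖ ≤ sSupOrderInterval (f n) u + 2 * ‖f n‖ * (δ / (4 * (M + 1))) :=
        opNorm_comp_le_sSupOrderInterval_add (f n) T hu (by positivity) fun x hx => hT x hx.le
    _ ≤ sSupOrderInterval (f n) u + 2 * (M + 1) * (δ / (4 * (M + 1))) := by gcongr; linarith [hM n]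
    _ = sSupOrderInterval (f n) u + δ / 2 := by field_simp; ring
    _ < δ := by linarith

/-- If `F` is a Banach lattice with property (d), then every
semi-compact operator `T : X → F` from a Banach space `X` is almost limited:
`‖T′ f_n‖ → 0` for every disjoint w*-null sequence `(f_n)` in `F′`. -/
theorem semi_compact_implies_almost_limited
    {X : Type*} [NormedAddCommGroup X] [NormedSpace ℝ X] [CompleteSpace X]
    {F : Type*} [NormedAddCommGroup F] [Lattice F] [IsOrderedAddMonoid F] [HasSolidNorm F] [NormedSpace ℝ F] [CompleteSpace F]
    -- property (d) of F
    (hd : ∀ f : ℕ → F →L[ℝ] ℝ,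
      (∀ n m, n ≠ m → DualDisjoint (f n) (f m)) →
      (∀ y : F, Tendsto (fun n => f n y) atTop (𝓝 0)) →
      ∀ y : F, 0 ≤ y →
        Tendsto (fun n => sSup {r : ℝ | ∃ w : F, |w| ≤ y ∧ r = f n w}) atTop (𝓝 0))
    (T : X →L[ℝ] F)
    -- T is semi-compact
    (hsc : ∀ ε : ℝ, 0 < ε → ∃ u : F, 0 ≤ u ∧
      ∀ x : X, ‖x‖ ≤ 1 → ‖(|T x| - u) ⊔ 0‖ ≤ ε) :
    ∀ f : ℕ → F →L[ℝ] ℝ,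
      (∀ n m, n ≠ m → DualDisjoint (f n) (f m)) →
      (∀ y : F, Tendsto (fun n => f n y) atTop (𝓝 0)) →
      Tendsto (fun n => ‖(f n).comp T‖) atTop (𝓝 0) :=
  semi_compact_implies_almost_limited_general hd T hsc
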